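/- arXiv:1810.07447 — 3 statements merged into one kernel-verified Lean document; each statement's English description precedes it below -/
import Mathlib

section
/- (Proposition 1) Suppose p^min, p^max ∈ (ℝ^I)^T satisfy the nonanticipative constraints: p^max_t − p^min_{t−1} ≤ Δ⁺_t and p^min_t − p^max_{t−1} ≥ Δ⁻_t (componentwise) for every t = 2,…,T; and the robust constraints: for every period t and every d ∈ D there exists p ∈ ℝ^I with A p + b + E d_t ≤ F and p^min_t ≤ p ≤ p^max_t. Then there exist functions g_t : ℝ^M → ℝ^I (t = 1,…,T), each depending only on the current-period load d_t, such that for every d ∈ D and every t: A g_t(d_t) + b + E d_t ≤ F, p^min_t ≤ g_t(d_t) ≤ p^max_t, and Δ⁻_t ≤ g_t(d_t) − g_{t−1}(d_{t−1}) ≤ Δ⁺_t for t = 2,…,T. In particular z is multi-stage robust. -/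
/-- **Proposition 1.** If `(pmin, pmax)` satisfy the nonanticipative (ramping) constraints and
the robust constraints (for every period `t` and every `d ∈ D` there is a feasible dispatch
between `pmin t` and `pmax t`), then there exist dispatch functions `g t` depending only on
the current-period load `d t` that are feasible for every `d ∈ D` and satisfy the ramping
constraints; in particular the commitment `z` is multi-stage robust. -/
theorem prop1_implicit_decision_rules_multistage_robust
    (T I M K : ℕ) (hT : 0 < T) (hI : 0 < I) (hM : 0 < M) (hK : 0 < K)
    (A : Matrix (Fin K) (Fin I) ℝ) (E : Matrix (Fin K) (Fin M) ℝ)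
    (b F : Fin K → ℝ)
    (Δp Δm : Fin T → Fin I → ℝ)
    (D : Set (Fin T → Fin M → ℝ))
    (pmin pmax : Fin T → Fin I → ℝ)
    -- nonanticipative constraints: pmax_{t+1} − pmin_t ≤ Δ⁺_{t+1}, pmin_{t+1} − pmax_t ≥ Δ⁻_{t+1}
    (hNC1 : ∀ (t : Fin T) (ht : (t : ℕ) + 1 < T) (i : Fin I),
      pmax ⟨(t : ℕ) + 1, ht⟩ i - pmin t i ≤ Δp ⟨(t : ℕ) + 1, ht⟩ i)
    (hNC2 : ∀ (t : Fin T) (ht : (t : ℕ) + 1 < T) (i : Fin I),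
      pmin ⟨(t : ℕ) + 1, ht⟩ i - pmax t i ≥ Δm ⟨(t : ℕ) + 1, ht⟩ i)
    -- robust constraints: ∀ t, ∀ d ∈ D, ∃ p with A p + b + E d_t ≤ F and pmin_t ≤ p ≤ pmax_t
    (hRob : ∀ (t : Fin T), ∀ d ∈ D, ∃ p : Fin I → ℝ,
      (∀ k, A.mulVec p k + b k + E.mulVec (d t) k ≤ F k) ∧
      (∀ i, pmin t i ≤ p i ∧ p i ≤ pmax t i)) :
    ∃ g : Fin T → (Fin M → ℝ) → (Fin I → ℝ),
      ∀ d ∈ D, ∀ t : Fin T,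
        (∀ k, A.mulVec (g t (d t)) k + b k + E.mulVec (d t) k ≤ F k) ∧
        (∀ i, pmin t i ≤ g t (d t) i ∧ g t (d t) i ≤ pmax t i) ∧
        (∀ (ht : (t : ℕ) + 1 < T) (i : Fin I),
          Δm ⟨(t : ℕ) + 1, ht⟩ i ≤
              g ⟨(t : ℕ) + 1, ht⟩ (d ⟨(t : ℕ) + 1, ht⟩) i - g t (d t) i ∧
          g ⟨(t : ℕ) + 1, ht⟩ (d ⟨(t : ℕ) + 1, ht⟩) i - g t (d t) i ≤
              Δp ⟨(t : ℕ) + 1, ht⟩ i) := by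
  classical
  set P : Fin T → (Fin M → ℝ) → (Fin I → ℝ) → Prop := fun t v p =>
    (∀ k, A.mulVec p k + b k + E.mulVec v k ≤ F k) ∧
    (∀ i, pmin t i ≤ p i ∧ p i ≤ pmax t i) with hP
  refine ⟨fun t v => if h : ∃ p, P t v p then h.choose else pmin t, fun d hd t => ?_⟩
  have hex : ∀ s : Fin T, ∃ p, P s (d s) p := by
    intro s
    obtain ⟨p, h1, h2⟩ := hRob s d hd
    exact ⟨p, h1, h2⟩
  have hspec : ∀ s : Fin T,
      P s (d s) ((fun t v => if h : ∃ p, P t v p then h.choose else pmin t) s (d s)) := by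
    intro s
    simp only [dif_pos (hex s)]
    exact (hex s).choose_spec
  obtain ⟨h1, h2⟩ := hspec t
  refine ⟨h1, h2, fun ht i => ?_⟩
  obtain ⟨_, h2'⟩ := hspec ⟨(t : ℕ) + 1, ht⟩
  constructor
  · have := hNC2 t ht i
    have a1 := (h2' i).1
    have a2 := (h2 i).2
    linarith
  · have := hNC1 t ht i
    have a1 := (h2' i).2
    have a2 := (h2 i).1
    linarith
end

section
/- (Proposition 2) Let g_t : ℝ^M → ℝ^I (t = 1,…,T) be dispatch functions depending only on the current-period load, such that for every d ∈ D: A g_t(d_t) + b + E d_t ≤ F for all t, and Δ⁻_t ≤ g_t(d_t) − g_{t−1}(d_{t−1}) ≤ Δ⁺_t for t = 2,…,T. Assume attainment: for each unit i and period t there exist scenarios d̲^{(i,t)}, d̄^{(i,t)} ∈ D with (g_t(d̲^{(i,t)}_t))_i ≤ (g_t(d_t))_i ≤ (g_t(d̄^{(i,t)}_t))_i for all d ∈ D; define p^min_{i,t} := (g_t(d̲^{(i,t)}_t))_i and p^max_{i,t} := (g_t(d̄^{(i,t)}_t))_i. Assume further (Assumption 2): for each i and each t = 2,…,T there exist scenarios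 d¹, d² ∈ D with d¹_t = d̄^{(i,t)}_t, d¹_{t−1} = d̲^{(i,t−1)}_{t−1}, and d²_t = d̲^{(i,t)}_t, d²_{t−1} = d̄^{(i,t−1)}_{t−1}. Then: (a) p^max_t − p^min_{t−1} ≤ Δ⁺_t and p^min_t − p^max_{t−1} ≥ Δ⁻_t componentwise for t = 2,…,T; and (b) for every d ∈ D and every t, p^min_t ≤ g_t(d_t) ≤ p^max_t and A g_t(d_t) + b + E d_t ≤ F. Hence (z, p^min, p^max) is feasible to the nonanticipative and robust constraints of MRUC-I. -/
/-- **Proposition 2.** If there is a set of dispatch functions `g t` depending only on the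
current-period load that are feasible for every `d ∈ D` and satisfy the ramping constraints,
with per-unit extrema attained within `D` (Assumption 1), and Assumption 2 holds (scenarios
combining the extrema at consecutive periods exist in `D`), then the bounds
`pmin/pmax` defined from these extrema satisfy the nonanticipative constraints and the robust
constraints of MRUC-I, i.e. the feasible region of MRUC-I is not reduced. -/
theorem prop2_feasible_region_not_reduced
    (T I M K : ℕ) (hT : 0 < T) (hI : 0 < I) (hM : 0 < M) (hK : 0 < K)
    (A : Matrix (Fin K) (Fin I) ℝ) (E : Matrix (Fin K) (Fin M) ℝ)
    (b F : Fin K → ℝ)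
    (Δp Δm : Fin T → Fin I → ℝ)
    (D : Set (Fin T → Fin M → ℝ))
    (g : Fin T → (Fin M → ℝ) → (Fin I → ℝ))
    -- the decision rules are feasible for every realization in D
    (hOp : ∀ d ∈ D, ∀ (t : Fin T) (k : Fin K),
      A.mulVec (g t (d t)) k + b k + E.mulVec (d t) k ≤ F k)
    (hRamp : ∀ d ∈ D, ∀ (t : Fin T) (ht : (t : ℕ) + 1 < T) (i : Fin I),
      Δm ⟨(t : ℕ) + 1, ht⟩ i ≤
          g ⟨(t : ℕ) + 1, ht⟩ (d ⟨(t : ℕ) + 1, ht⟩) i - g t (d t) i ∧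
      g ⟨(t : ℕ) + 1, ht⟩ (d ⟨(t : ℕ) + 1, ht⟩) i - g t (d t) i ≤
          Δp ⟨(t : ℕ) + 1, ht⟩ i)
    -- attainment: for each unit i and period t, scenarios of D attaining min/max of (g t ·) i
    (dlo dhi : Fin I → Fin T → (Fin T → Fin M → ℝ))
    (hdlo : ∀ i t, dlo i t ∈ D) (hdhi : ∀ i t, dhi i t ∈ D)
    (hAtt : ∀ (i : Fin I) (t : Fin T), ∀ d ∈ D,
      g t (dlo i t t) i ≤ g t (d t) i ∧ g t (d t) i ≤ g t (dhi i t t) i)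
    (pmin pmax : Fin T → Fin I → ℝ)
    (hpmin : ∀ t i, pmin t i = g t (dlo i t t) i)
    (hpmax : ∀ t i, pmax t i = g t (dhi i t t) i)
    -- Assumption 2: scenarios combining extrema at consecutive periods exist in D
    (hA2 : ∀ (i : Fin I) (t : Fin T) (ht : (t : ℕ) + 1 < T),
      (∃ d1 ∈ D, d1 ⟨(t : ℕ) + 1, ht⟩ = dhi i ⟨(t : ℕ) + 1, ht⟩ ⟨(t : ℕ) + 1, ht⟩ ∧
        d1 t = dlo i t t) ∧
      (∃ d2 ∈ D, d2 ⟨(t : ℕ) + 1, ht⟩ = dlo i ⟨(t : ℕ) + 1, ht⟩ ⟨(t : ℕ) + 1, ht⟩ ∧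
        d2 t = dhi i t t)) :
    -- (a) nonanticipative constraints hold
    (∀ (t : Fin T) (ht : (t : ℕ) + 1 < T) (i : Fin I),
      pmax ⟨(t : ℕ) + 1, ht⟩ i - pmin t i ≤ Δp ⟨(t : ℕ) + 1, ht⟩ i ∧
      pmin ⟨(t : ℕ) + 1, ht⟩ i - pmax t i ≥ Δm ⟨(t : ℕ) + 1, ht⟩ i) ∧
    -- (b) robust constraints hold
    (∀ d ∈ D, ∀ t : Fin T,
      (∀ i, pmin t i ≤ g t (d t) i ∧ g t (d t) i ≤ pmax t i) ∧
      (∀ k, A.mulVec (g t (d t)) k + b k + E.mulVec (d t) k ≤ F k)) := by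
  constructor
  · intro t ht i
    obtain ⟨⟨d1, hd1, hd1a, hd1b⟩, ⟨d2, hd2, hd2a, hd2b⟩⟩ := hA2 i t ht
    have h1 := hRamp d1 hd1 t ht i
    have h2 := hRamp d2 hd2 t ht i
    rw [hd1a, hd1b] at h1
    rw [hd2a, hd2b] at h2
    constructor
    · rw [hpmax, hpmin]; linarith [h1.2]
    · rw [hpmin, hpmax]; linarith [h2.1]
  · intro d hd t
    refine ⟨fun i => ?_, fun k => hOp d hd t k⟩
    have h := hAtt i t d hd
    rw [hpmin, hpmax]
    exact h
end

section
/- (Sufficient condition for multi-stage robustness via the time-decoupled subproblems) Suppose p^min, p^max ∈ (ℝ^I)^T satisfy p^max_t − p^min_{t−1} ≤ Δ⁺_t and p^min_t − p^max_{t−1} ≥ Δ⁻_t componentwise for every t = 2,…,T, and suppose that for every period t and every per-period load d_t ∈ D_t there exists p ∈ ℝ^I with A p + b + E d_t ≤ F and p^min_t ≤ p ≤ p^max_t. If D ⊆ {d ∈ (ℝ^M)^T : d_t ∈ D_t for all t}, then there exist functions g_t : ℝ^M → ℝ^I such that for every d ∈ D and every t: A g_t(d_t) + b + E d_t ≤ F,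 p^min_t ≤ g_t(d_t) ≤ p^max_t, and Δ⁻_t ≤ g_t(d_t) − g_{t−1}(d_{t−1}) ≤ Δ⁺_t for t = 2,…,T; in particular z is multi-stage robust. -/
/-- **Sufficient condition for multi-stage robustness via the time-decoupled subproblems.**
If `(pmin, pmax)` satisfy the nonanticipative constraints and for every period `t` and every
per-period load `d_t ∈ D_t` there is a feasible dispatch between `pmin t` and `pmax t`, and
`D` is contained in the product of the `D_t`, then there exist dispatch functions `g t`
depending only on the current-period load that are feasible for every `d ∈ D` and satisfy the
ramping constraints; in particular `z` is multi-stage robust. -/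
theorem time_decoupled_sufficient_for_multistage_robust
    (T I M K : ℕ) (hT : 0 < T) (hI : 0 < I) (hM : 0 < M) (hK : 0 < K)
    (A : Matrix (Fin K) (Fin I) ℝ) (E : Matrix (Fin K) (Fin M) ℝ)
    (b F : Fin K → ℝ)
    (Δp Δm : Fin T → Fin I → ℝ)
    (Dt : Fin T → Set (Fin M → ℝ))
    (D : Set (Fin T → Fin M → ℝ))
    (pmin pmax : Fin T → Fin I → ℝ)
    (hNC1 : ∀ (t : Fin T) (ht : (t : ℕ) + 1 < T) (i : Fin I),
      pmax ⟨(t : ℕ) + 1, ht⟩ i - pmin t i ≤ Δp ⟨(t : ℕ) + 1, ht⟩ i)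
    (hNC2 : ∀ (t : Fin T) (ht : (t : ℕ) + 1 < T) (i : Fin I),
      pmin ⟨(t : ℕ) + 1, ht⟩ i - pmax t i ≥ Δm ⟨(t : ℕ) + 1, ht⟩ i)
    -- per-period robust feasibility over the per-period uncertainty sets
    (hRob : ∀ (t : Fin T), ∀ dt ∈ Dt t, ∃ p : Fin I → ℝ,
      (∀ k, A.mulVec p k + b k + E.mulVec dt k ≤ F k) ∧
      (∀ i, pmin t i ≤ p i ∧ p i ≤ pmax t i))
    (hsub : ∀ d ∈ D, ∀ t : Fin T, d t ∈ Dt t) :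
    ∃ g : Fin T → (Fin M → ℝ) → (Fin I → ℝ),
      ∀ d ∈ D, ∀ t : Fin T,
        (∀ k, A.mulVec (g t (d t)) k + b k + E.mulVec (d t) k ≤ F k) ∧
        (∀ i, pmin t i ≤ g t (d t) i ∧ g t (d t) i ≤ pmax t i) ∧
        (∀ (ht : (t : ℕ) + 1 < T) (i : Fin I),
          Δm ⟨(t : ℕ) + 1, ht⟩ i ≤
              g ⟨(t : ℕ) + 1, ht⟩ (d ⟨(t : ℕ) + 1, ht⟩) i - g t (d t) i ∧
          g ⟨(t : ℕ) + 1, ht⟩ (d ⟨(t : ℕ) + 1, ht⟩) i - g t (d t) i ≤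
              Δp ⟨(t : ℕ) + 1, ht⟩ i) := by
  classical
  choose p hp1 hp2 using hRob
  refine ⟨fun t dt => if h : dt ∈ Dt t then p t dt h else 0, ?_⟩
  intro d hd t
  have hmem : ∀ s : Fin T, d s ∈ Dt s := hsub d hd
  simp only [dif_pos (hmem t)]
  refine ⟨hp1 t (d t) (hmem t), hp2 t (d t) (hmem t), ?_⟩
  intro ht i
  simp only [dif_pos (hmem ⟨(t : ℕ) + 1, ht⟩)]
  have h1 := (hp2 t (d t) (hmem t) i)
  have h2 := (hp2 ⟨(t : ℕ) + 1, ht⟩ (d ⟨(t : ℕ) + 1, ht⟩) (hmem _) i)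
  constructor
  · have := hNC2 t ht i; linarith [h1.2, h2.1]
  · have := hNC1 t ht i; linarith [h1.1, h2.2]
end
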